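/- The entries of any 3×3 magic matrix over a unital C*-algebra pairwise commute. -/

import Mathlib

def IsMagic {A : Type*} [NormedRing A] [StarRing A] [CStarRing A] {N : ℕ}
    (u : Fin N → Fin N → A) : Prop :=
  (∀ i j, star (u i j) = u i j ∧ u i j * u i j = u i j) ∧
  (∀ i, ∑ j, u i j = 1) ∧ (∀ j, ∑ i, u i j = 1)

/-!
Three idempotents summing to `1` in a ring without `2`-torsion are pairwise orthogonal, so entries
in a common row or column of the magic matrix have zero products. For entries `P = u i j` and
`Q = u k l` in different rows and columns, let `R = u m n` be the entry in the remaining row and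
column. Expanding `Q` along row `k` and then column `n` gives `P Q = P R`, and likewise (after
taking adjoints) `P Q = R Q`; hence `P Q P Q = P R R Q = P Q` is idempotent. An idempotent product
of two projections forces them to commute: `x = P Q (1 - P)` satisfies `x x⋆ = 0`, so
`P Q = P Q P`, which is self-adjoint.
-/

theorem IsIdempotentElem.mul_eq_zero_of_add_add_eq_one {R : Type*} [Ring R] [IsAddTorsionFree R]
    {p q r : R} (hp : IsIdempotentElem p) (hq : IsIdempotentElem q) (hr : IsIdempotentElem r)
    (hpqr : p + q + r = 1) : p * q = 0 := by
  have hpq : IsIdempotentElem (p + q) := eq_sub_of_add_eq hpqr ▸ hr.one_sub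
  exact hp.mul_eq_zero_of_anticommute ((hp.add_iff hq).mp hpq)

theorem IsStarProjection.commute_of_isIdempotentElem_mul {E : Type*} [NormedRing E] [StarRing E]
    [CStarRing E] {p q : E} (hp : IsStarProjection p) (hq : IsStarProjection q)
    (hpq : IsIdempotentElem (p * q)) : Commute p q := by
  have hstar : star (p * q * (1 - p)) = (1 - p) * q * p := by
    simp [star_mul, hp.isSelfAdjoint.star_eq, hq.isSelfAdjoint.star_eq, mul_assoc]
  have hzero : p * q * (1 - p) * star (p * q * (1 - p)) = 0 := by
    calc p * q * (1 - p) * star (p * q * (1 - p))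
        = p * q * ((1 - p) * (1 - p)) * q * p := by rw [hstar]; noncomm_ring
      _ = p * (q * q) * p - (p * q) * (p * q) * p := by
        rw [hp.one_sub.isIdempotentElem.eq]; noncomm_ring
      _ = 0 := by rw [hq.isIdempotentElem.eq, hpq.eq, sub_self]
  have hpqp : p * q = p * q * p := by
    rw [CStarRing.mul_star_self_eq_zero_iff, mul_sub, mul_one, sub_eq_zero] at hzero
    exact hzero
  have hqp : q * p = p * q * p := by
    simpa [star_mul, hp.isSelfAdjoint.star_eq, hq.isSelfAdjoint.star_eq, mul_assoc]
      using congr(star $hpqp)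
  exact hpqp.trans hqp.symm

theorem Fin.exists_ne_and_ne_of_ne {a b : Fin 3} (hab : a ≠ b) : ∃ c, a ≠ c ∧ b ≠ c := by
  revert a b; decide

theorem Fin.sum_univ_three_of_ne {M : Type*} [AddCommMonoid M] (f : Fin 3 → M) {a b c : Fin 3}
    (hab : a ≠ b) (hac : a ≠ c) (hbc : b ≠ c) : ∑ x, f x = f a + f b + f c := by
  fin_cases a <;> fin_cases b <;> fin_cases c <;> simp_all [Fin.sum_univ_three] <;> abel

namespace IsMagic

variable {A : Type*} [NormedRing A] [StarRing A] [CStarRing A]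

section

variable {N : ℕ} {u : Fin N → Fin N → A}

theorem transpose (hu : IsMagic u) : IsMagic fun i j ↦ u j i :=
  ⟨fun i j ↦ hu.1 j i, hu.2.2, hu.2.1⟩

theorem isStarProjection (hu : IsMagic u) (i j : Fin N) : IsStarProjection (u i j) :=
  isStarProjection_iff'.2 ⟨(hu.1 i j).2, (hu.1 i j).1⟩

end

variable {u : Fin 3 → Fin 3 → A}

theorem add_add_eq_one (hu : IsMagic u) (i : Fin 3) {j l n : Fin 3}
    (hjl : j ≠ l) (hjn : j ≠ n) (hln : l ≠ n) : u i j + u i l + u i n = 1 :=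
  (Fin.sum_univ_three_of_ne (u i) hjl hjn hln).symm.trans (hu.2.1 i)

variable [IsAddTorsionFree A]

theorem mul_eq_zero_of_ne (hu : IsMagic u) (i : Fin 3) {j l : Fin 3} (hjl : j ≠ l) :
    u i j * u i l = 0 := by
  obtain ⟨n, hjn, hln⟩ := Fin.exists_ne_and_ne_of_ne hjl
  exact IsIdempotentElem.mul_eq_zero_of_add_add_eq_one (hu.isStarProjection i j).isIdempotentElem
    (hu.isStarProjection i l).isIdempotentElem (hu.isStarProjection i n).isIdempotentElem
    (hu.add_add_eq_one i hjl hjn hln)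

theorem commute_same_row (hu : IsMagic u) (i j l : Fin 3) : Commute (u i j) (u i l) := by
  rcases eq_or_ne j l with rfl | hjl
  · exact Commute.refl _
  · rw [Commute, SemiconjBy, hu.mul_eq_zero_of_ne i hjl, hu.mul_eq_zero_of_ne i hjl.symm]

theorem mul_eq_mul_of_ne (hu : IsMagic u) {i k m j l n : Fin 3}
    (hik : i ≠ k) (him : i ≠ m) (hkm : k ≠ m) (hjl : j ≠ l) (hjn : j ≠ n) (hln : l ≠ n) :
    u i j * u k l = u i j * u m n := by
  have hkl : u k l = 1 - u k j - u k n := by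
    rw [← hu.add_add_eq_one k hjl hjn hln]; abel
  have hkn : u k n = 1 - u i n - u m n := by
    rw [← hu.transpose.add_add_eq_one n hik him hkm]; abel
  rw [hkl, mul_sub, mul_sub, hu.transpose.mul_eq_zero_of_ne j hik, hkn, mul_sub, mul_sub,
    hu.mul_eq_zero_of_ne i hjn]
  abel

theorem commute_of_ne (hu : IsMagic u) {i k j l : Fin 3} (hik : i ≠ k) (hjl : j ≠ l) :
    Commute (u i j) (u k l) := by
  obtain ⟨m, him, hkm⟩ := Fin.exists_ne_and_ne_of_ne hik
  obtain ⟨n, hjn, hln⟩ := Fin.exists_ne_and_ne_of_ne hjl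
  have hPR : u i j * u k l = u i j * u m n := hu.mul_eq_mul_of_ne hik him hkm hjl hjn hln
  have hRQ : u i j * u k l = u m n * u k l := by
    simpa [star_mul, (hu.isStarProjection _ _).isSelfAdjoint.star_eq] using
      congr(star $(hu.mul_eq_mul_of_ne hik.symm hkm him hjl.symm hln hjn))
  refine (hu.isStarProjection i j).commute_of_isIdempotentElem_mul (hu.isStarProjection k l) ?_
  calc u i j * u k l * (u i j * u k l) = u i j * (u m n * u m n) * u k l := by
        nth_rw 2 [hRQ]; rw [hPR]; noncomm_ring
    _ = u i j * u k l := by rw [(hu.1 m n).2, mul_assoc, ← hRQ, ← mul_assoc, (hu.1 i j).2]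

end IsMagic

theorem magic_three_commutes_general {A : Type*} [NormedRing A] [StarRing A]
    [CStarRing A] [NormedAlgebra ℂ A]
    (u : Fin 3 → Fin 3 → A) (hu : IsMagic u) :
    ∀ i j k l, u i j * u k l = u k l * u i j := by
  have : IsAddTorsionFree A := .of_isTorsionFree ℂ A
  intro i j k l
  rcases eq_or_ne i k with rfl | hik
  · exact hu.commute_same_row i j l
  rcases eq_or_ne j l with rfl | hjl
  · exact hu.transpose.commute_same_row j i k
  · exact hu.commute_of_ne hik hjl

theorem magic_three_commutes {A : Type*} [NormedRing A] [StarRing A]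
    [CStarRing A] [CompleteSpace A] [NormedAlgebra ℂ A]
    (u : Fin 3 → Fin 3 → A) (hu : IsMagic u) :
    ∀ i j k l, u i j * u k l = u k l * u i j :=
  magic_three_commutes_general u hu
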